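/- Let (Ω, μ) be a probability space, let d, h ∈ ℕ, and let W : ℝ^d → ℝ^h be a continuous linear map (the shared weight matrix of a 1-layer GCN) with operator norm ‖W‖. Let n ≥ 0 and suppose node u in the source network has neighbors indexed by j ∈ Fin n with (random) augmented attribute vectors x̂ⱼˢ : Ω → ℝ^d, and node v in the target network has neighbors matched one-to-one to those of u (the ACN assumption) with attribute vectors x̂ⱼᵗ : Ω → ℝ^d; let x̂ᵤ, x̂ᵥ : Ω → ℝ^d be the attribute vectors of u and v. Assume all these maps are Bochner integrable. Define the pre-activation GCN outputs with mean aggregation over the node and its neighbors: ĥᵤ(ω) = W((1/(n+1))(x̂ᵤ(ω) + Σⱼ x̂ⱼˢ(ω))) and ĥᵥ(ω) = W((1/(n+1))(x̂ᵥ(ω) + Σⱼ x̂ⱼᵗ(ω))). If for some ε > 0 we have 𝔼[‖x̂ᵤ − x̂ᵥ‖₂] ≤ ε and 𝔼[‖x̂ⱼˢ − x̂ⱼᵗ‖₂] ≤ ε for every j ∈ Fin n, then 𝔼[‖ĥᵤ − ĥᵥ‖₂] ≤ ‖W‖ · ε. -/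

import Mathlib

open MeasureTheory

/-! Pointwise, `ĥᵤ - ĥᵥ = W (1/(n+1) • ((x̂ᵤ - x̂ᵥ) + ∑ⱼ (x̂ⱼˢ - x̂ⱼᵗ)))`, so its norm is at most
`‖W‖/(n+1)` times the sum of the `n + 1` matched distances. Each of these has expectation at most
`ε`, and the factor `n + 1` cancels against the mean. -/

theorem ContinuousLinearMap.norm_map_smul_add_sum_sub_le {𝕜 E F ι : Type*}
    [NontriviallyNormedField 𝕜] [SeminormedAddCommGroup E] [NormedSpace 𝕜 E]
    [SeminormedAddCommGroup F] [NormedSpace 𝕜 F]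
    (W : E →L[𝕜] F) (c : 𝕜) (s : Finset ι) (x x' : E) (y y' : ι → E) :
    ‖W (c • (x + ∑ j ∈ s, y j)) - W (c • (x' + ∑ j ∈ s, y' j))‖ ≤
      ‖W‖ * ‖c‖ * (‖x - x'‖ + ∑ j ∈ s, ‖y j - y' j‖) := by
  have hdiff : c • (x + ∑ j ∈ s, y j) - c • (x' + ∑ j ∈ s, y' j) =
      c • ((x - x') + ∑ j ∈ s, (y j - y' j)) := by
    rw [← smul_sub, Finset.sum_sub_distrib]
    abel_nf
  calc ‖W (c • (x + ∑ j ∈ s, y j)) - W (c • (x' + ∑ j ∈ s, y' j))‖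
      ≤ ‖W‖ * (‖c‖ * ‖(x - x') + ∑ j ∈ s, (y j - y' j)‖) := by
        rw [← map_sub, hdiff, ← norm_smul]
        exact W.le_opNorm _
    _ ≤ ‖W‖ * (‖c‖ * (‖x - x'‖ + ∑ j ∈ s, ‖y j - y' j‖)) := by
        gcongr
        exact (norm_add_le _ _).trans (add_le_add_right (norm_sum_le _ _) _)
    _ = ‖W‖ * ‖c‖ * (‖x - x'‖ + ∑ j ∈ s, ‖y j - y' j‖) := by ring

theorem MeasureTheory.integral_add_sum_le_card_succ_mul {Ω ι : Type*} [MeasurableSpace Ω]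
    {μ : Measure Ω} {f : Ω → ℝ} {g : ι → Ω → ℝ} {s : Finset ι} {ε : ℝ}
    (hf : Integrable f μ) (hg : ∀ j ∈ s, Integrable (g j) μ)
    (hfε : ∫ ω, f ω ∂μ ≤ ε) (hgε : ∀ j ∈ s, ∫ ω, g j ω ∂μ ≤ ε) :
    ∫ ω, (f ω + ∑ j ∈ s, g j ω) ∂μ ≤ (s.card + 1) * ε := by
  rw [integral_add hf (integrable_finsetSum s hg), integral_finsetSum s hg]
  have hsum : ∑ j ∈ s, ∫ ω, g j ω ∂μ ≤ s.card * ε := by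
    simpa using Finset.sum_le_sum hgε
  linarith

theorem grad_align_plus_thm31_expectation_general
    {Ω : Type*} [MeasurableSpace Ω] (μ : Measure Ω)
    (d h n : ℕ)
    (W : EuclideanSpace ℝ (Fin d) →L[ℝ] EuclideanSpace ℝ (Fin h))
    (xu xv : Ω → EuclideanSpace ℝ (Fin d))
    (xs xt : Fin n → Ω → EuclideanSpace ℝ (Fin d))
    (hxu : Integrable xu μ) (hxv : Integrable xv μ)
    (hxs : ∀ j, Integrable (xs j) μ) (hxt : ∀ j, Integrable (xt j) μ)
    (hu hv : Ω → EuclideanSpace ℝ (Fin h))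
    (hhu : ∀ ω, hu ω = W ((1 / ((n : ℝ) + 1)) • (xu ω + ∑ j, xs j ω)))
    (hhv : ∀ ω, hv ω = W ((1 / ((n : ℝ) + 1)) • (xv ω + ∑ j, xt j ω)))
    (ε : ℝ)
    (huv : (∫ ω, ‖xu ω - xv ω‖ ∂μ) ≤ ε)
    (hst : ∀ j, (∫ ω, ‖xs j ω - xt j ω‖ ∂μ) ≤ ε) :
    (∫ ω, ‖hu ω - hv ω‖ ∂μ) ≤ ‖W‖ * ε := by
  set c : ℝ := 1 / ((n : ℝ) + 1)
  set D : Ω → ℝ := fun ω ↦ ‖xu ω - xv ω‖ + ∑ j, ‖xs j ω - xt j ω‖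
  have hD_int : Integrable D μ :=
    (hxu.sub hxv).norm.add (integrable_finsetSum _ fun j _ ↦ ((hxs j).sub (hxt j)).norm)
  have hD_le : ∫ ω, D ω ∂μ ≤ (n + 1) * ε := by
    simpa using integral_add_sum_le_card_succ_mul (s := Finset.univ) (hxu.sub hxv).norm
      (fun j _ ↦ ((hxs j).sub (hxt j)).norm) huv (fun j _ ↦ hst j)
  have hpointwise : ∀ ω, ‖hu ω - hv ω‖ ≤ ‖W‖ * c * D ω := fun ω ↦ by
    simpa [hhu ω, hhv ω, abs_of_pos (by positivity : 0 < c)] using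
      W.norm_map_smul_add_sum_sub_le c Finset.univ (xu ω) (xv ω) (fun j ↦ xs j ω) (fun j ↦ xt j ω)
  calc ∫ ω, ‖hu ω - hv ω‖ ∂μ
      ≤ ∫ ω, ‖W‖ * c * D ω ∂μ :=
        integral_mono_of_nonneg (.of_forall fun _ ↦ norm_nonneg _) (hD_int.const_mul _)
          (.of_forall hpointwise)
    _ = ‖W‖ * c * ∫ ω, D ω ∂μ := integral_const_mul _ _
    _ ≤ ‖W‖ * c * ((n + 1) * ε) := by gcongr
    _ = ‖W‖ * ε := by simp only [c]; field_simp

/-- **Theorem 3.1 (probabilistic form).** For a ground-truth node pair `(u, v)` whose `n`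
neighbors are matched one-to-one (the ACN assumption), if the expected Euclidean distances
between the (random) augmented attribute vectors of `u` and `v` and between each matched
neighbor pair are all at most `ε`, then the expected Euclidean distance between the
pre-activation 1-layer GCN outputs (mean aggregation followed by the shared weight map `W`)
is at most `‖W‖ * ε`. -/
theorem grad_align_plus_thm31_expectation
    {Ω : Type*} [MeasurableSpace Ω] (μ : Measure Ω) [IsProbabilityMeasure μ]
    (d h n : ℕ)
    (W : EuclideanSpace ℝ (Fin d) →L[ℝ] EuclideanSpace ℝ (Fin h))
    (xu xv : Ω → EuclideanSpace ℝ (Fin d))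
    (xs xt : Fin n → Ω → EuclideanSpace ℝ (Fin d))
    (hxu : Integrable xu μ) (hxv : Integrable xv μ)
    (hxs : ∀ j, Integrable (xs j) μ) (hxt : ∀ j, Integrable (xt j) μ)
    (hu hv : Ω → EuclideanSpace ℝ (Fin h))
    (hhu : ∀ ω, hu ω = W ((1 / ((n : ℝ) + 1)) • (xu ω + ∑ j, xs j ω)))
    (hhv : ∀ ω, hv ω = W ((1 / ((n : ℝ) + 1)) • (xv ω + ∑ j, xt j ω)))
    (ε : ℝ) (hε : 0 < ε)
    (huv : (∫ ω, ‖xu ω - xv ω‖ ∂μ) ≤ ε)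
    (hst : ∀ j, (∫ ω, ‖xs j ω - xt j ω‖ ∂μ) ≤ ε) :
    (∫ ω, ‖hu ω - hv ω‖ ∂μ) ≤ ‖W‖ * ε :=
  grad_align_plus_thm31_expectation_general μ d h n W xu xv xs xt hxu hxv hxs hxt hu hv hhu hhv ε
    huv hst
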